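/- arXiv:1711.04752 — 4 statements merged into one kernel-verified Lean document; each statement's English description precedes it below -/
import Mathlib

section
/- Let Δ(u) = {c_{ij} = ε_i + ε_j : 1 ≤ i ≤ j ≤ n} (where b_i = c_{ii} = 2ε_i) be the roots of the abelian nilradical of the |1|-graded parabolic of sp(2n,ℂ). A subset S ⊆ Δ(u) is admissible (i.e., both S and its complement in the positive roots are closed under addition of positive roots, when sums are roots) if and only if: whenever c_{ij} ∈ S with i ≤ j, then c_{kl} ∈ S for all k ≥ i, l ≥ j with k ≤ l ≤ n. -/
namespace Stmt0

/-- The weight `ε_i` as an integer vector. -/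
def eps (n : ℕ) (i : Fin n) : Fin n → ℤ := fun t => if t = i then 1 else 0

/-- The root `c_{ij} = ε_i + ε_j` (with `c_{ii} = b_i = 2ε_i`). -/
def cRoot (n : ℕ) (i j : Fin n) : Fin n → ℤ := eps n i + eps n j

/-- The root `a_{ij} = ε_i - ε_j`. -/
def aRoot (n : ℕ) (i j : Fin n) : Fin n → ℤ := eps n i - eps n j

/-- The positive roots of `sp(2n, ℂ)`. -/
def posRoots (n : ℕ) : Set (Fin n → ℤ) :=
  {v | (∃ i j : Fin n, i < j ∧ v = aRoot n i j) ∨ (∃ i j : Fin n, i ≤ j ∧ v = cRoot n i j)}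

/-- The roots `Δ(u)` of the abelian nilradical of the `|1|`-graded parabolic. -/
def DeltaU (n : ℕ) : Set (Fin n → ℤ) := {v | ∃ i j : Fin n, i ≤ j ∧ v = cRoot n i j}

/-- A set of roots is saturated if it is closed under addition of its elements,
whenever the sum is again a positive root. -/
def Saturated (n : ℕ) (T : Set (Fin n → ℤ)) : Prop :=
  ∀ α ∈ T, ∀ β ∈ T, α + β ∈ posRoots n → α + β ∈ T

def sco (n : ℕ) (v : Fin n → ℤ) : ℤ := ∑ t, v t

lemma sco_add (n : ℕ) (v w : Fin n → ℤ) : sco n (v + w) = sco n v + sco n w := by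
  simp [sco, Finset.sum_add_distrib]

lemma sco_aRoot (n : ℕ) (i j : Fin n) : sco n (aRoot n i j) = 0 := by
  simp [sco, aRoot, eps, Finset.sum_sub_distrib]

lemma sco_cRoot (n : ℕ) (i j : Fin n) : sco n (cRoot n i j) = 2 := by
  simp [sco, cRoot, eps, Finset.sum_add_distrib]

lemma sco_mem_DeltaU (n : ℕ) {v : Fin n → ℤ} (h : v ∈ DeltaU n) : sco n v = 2 := by
  obtain ⟨i, j, -, rfl⟩ := h; exact sco_cRoot n i j

lemma cRoot_comm (n : ℕ) (i j : Fin n) : cRoot n i j = cRoot n j i := by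
  simp [cRoot, add_comm]

lemma aRoot_add_cRoot (n : ℕ) (i k l : Fin n) :
    aRoot n i k + cRoot n k l = cRoot n i l := by
  simp only [aRoot, cRoot]; abel

lemma aRoot_add_cRoot' (n : ℕ) (a b c : Fin n) :
    aRoot n a b + cRoot n c b = cRoot n c a := by
  simp only [aRoot, cRoot]; abel

lemma aRoot_not_mem (n : ℕ) {S : Set (Fin n → ℤ)} (hS : S ⊆ DeltaU n) (i j : Fin n) :
    aRoot n i j ∉ S := by
  intro h
  have := sco_mem_DeltaU n (hS h)
  rw [sco_aRoot] at this
  omega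

lemma key (n : ℕ) {S : Set (Fin n → ℤ)} (hS : S ⊆ DeltaU n)
    (H : ∀ i j : Fin n, i ≤ j → cRoot n i j ∈ S →
        ∀ k l : Fin n, i ≤ k → j ≤ l → k ≤ l → cRoot n k l ∈ S)
    {p q i j : Fin n} (hpq : p < q) (hij : i ≤ j) (hβS : cRoot n i j ∉ S)
    (hsum : aRoot n p q + cRoot n i j ∈ S) : False := by
  by_cases hqi : q = i
  · subst hqi
    rw [aRoot_add_cRoot] at hsum
    have hpj : p ≤ j := le_trans hpq.le hij
    exact hβS (H p j hpj hsum q j hpq.le le_rfl hij)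
  · by_cases hqj : q = j
    · subst hqj
      rw [aRoot_add_cRoot'] at hsum
      rcases le_total i p with hip | hpi
      · exact hβS (H i p hip hsum i q le_rfl hpq.le hij)
      · rw [cRoot_comm] at hsum
        exact hβS (H p i hpi hsum i q hpi hij hij)
    · obtain ⟨k, l, hkl, heq⟩ := hS hsum
      have h := congrFun heq q
      have hqp : ¬ (q = p) := fun e => absurd e.symm hpq.ne
      simp [aRoot, cRoot, eps, hqp, hqi, hqj] at h
      split_ifs at h <;> omega

/-- A subset `S ⊆ Δ(u)` is admissible (both `S` and its complement in the positive roots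
are saturated) iff whenever `c_{ij} ∈ S` with `i ≤ j`, also `c_{kl} ∈ S` for all
`k ≥ i`, `l ≥ j` with `k ≤ l ≤ n`. -/
theorem admissible_iff_staircase (n : ℕ) (S : Set (Fin n → ℤ)) (hS : S ⊆ DeltaU n) :
    (Saturated n S ∧ Saturated n (posRoots n \ S)) ↔
      (∀ i j : Fin n, i ≤ j → cRoot n i j ∈ S →
        ∀ k l : Fin n, i ≤ k → j ≤ l → k ≤ l → cRoot n k l ∈ S) := by
  constructor
  · rintro ⟨-, hT⟩ i j hij hc k l hik hjl hkl
    by_contra hkl'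
    have hT1 : cRoot n k l ∈ posRoots n \ S :=
      ⟨Or.inr ⟨k, l, hkl, rfl⟩, hkl'⟩
    have hT2 : cRoot n i l ∈ posRoots n \ S := by
      rcases eq_or_lt_of_le hik with h | h
      · rw [h]; exact hT1
      · have ha : aRoot n i k ∈ posRoots n \ S :=
          ⟨Or.inl ⟨i, k, h, rfl⟩, aRoot_not_mem n hS i k⟩
        have hil : i ≤ l := le_trans hik hkl
        have := hT _ ha _ hT1 (by rw [aRoot_add_cRoot]; exact Or.inr ⟨i, l, hil, rfl⟩)
        rwa [aRoot_add_cRoot] at this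
    rcases eq_or_lt_of_le hjl with h | h
    · rw [h] at hc; exact hT2.2 hc
    · have ha : aRoot n j l ∈ posRoots n \ S :=
        ⟨Or.inl ⟨j, l, h, rfl⟩, aRoot_not_mem n hS j l⟩
      have := hT _ ha _ hT2 (by rw [aRoot_add_cRoot']; exact Or.inr ⟨i, j, hij, rfl⟩)
      rw [aRoot_add_cRoot'] at this
      exact this.2 hc
  · intro H
    constructor
    · intro α hα β hβ hpos
      exfalso
      have h1 := sco_mem_DeltaU n (hS hα)
      have h2 := sco_mem_DeltaU n (hS hβ)
      have h3 : sco n (α + β) = 4 := by rw [sco_add]; omega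
      rcases hpos with ⟨a, b, -, he⟩ | ⟨a, b, -, he⟩
      · rw [he, sco_aRoot] at h3; omega
      · rw [he, sco_cRoot] at h3; omega
    · rintro α ⟨hαp, hαS⟩ β ⟨hβp, hβS⟩ hpos
      refine ⟨hpos, fun hsum => ?_⟩
      have hsco := sco_mem_DeltaU n (hS hsum)
      rw [sco_add] at hsco
      rcases hαp with ⟨p, q, hpq, rfl⟩ | ⟨p, q, hpq, rfl⟩
      · rcases hβp with ⟨a, b, hab, rfl⟩ | ⟨i, j, hij, rfl⟩
        · rw [sco_aRoot, sco_aRoot] at hsco; omega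
        · exact key n hS H hpq hij hβS hsum
      · rcases hβp with ⟨i, j, hij, rfl⟩ | ⟨a, b, hab, rfl⟩
        · rw [add_comm] at hsum
          exact key n hS H hij hpq hαS hsum
        · rw [sco_cRoot, sco_cRoot] at hsco; omega

end Stmt0
end

section
/- Let λ = [λ_1, …, λ_n] ∈ ℂ^n and let w ∈ W^p have LS word with digit 1 exactly at positions i_1 < ⋯ < i_k. Then the standard Weyl group action of w on λ (acting by signed permutations of coordinates) yields the n-tuple obtained by deleting the coordinates λ_{i_1}, …, λ_{i_k} from λ, keeping the remaining coordinates in order, and appending −λ_{i_k}, −λ_{i_{k−1}}, …, −λ_{i_1} at the end. -/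
/-!
Column `j + 1` of the word deletes the entry at position `p = I (j + 1) - j`, shifts the entries at
positions `p + 1, …, n - j` one step to the left and writes minus the deleted entry at position
`n - j` (`colStack_apply`). By induction on `j`, after `j` columns the positions `1, …, n - j` carry
the coordinates of `λ` other than `λ_{I 1}, …, λ_{I j}`, in increasing order, and position
`n + 1 - s` carries `-λ_{I s}` for `s ≤ j`. The entry deleted by column `j + 1` is `λ_{I (j + 1)}`
because exactly `I (j + 1) - 1 - j` of the remaining coordinates lie below `I (j + 1)`.
-/

namespace Stmt4

/-- The reflection `σ_{ε_i + ε_j}` of the Weyl group of `sp(2n, ℂ)` acting on coordinate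
tuples: it swaps coordinates `i` and `j` and negates them both.  For `i = j` this is the
reflection `σ_{2ε_i}`, negating the `i`-th coordinate. -/
def reflC (i j : ℕ) (f : ℕ → ℂ) : ℕ → ℂ :=
  fun t => if t = i then -f j else if t = j then -f i else f t

/-- The column `σ_{ε_{col-m}+ε_col} ∘ ⋯ ∘ σ_{ε_{col-1}+ε_col} ∘ σ_{2ε_col}`
(the reflection in `2ε_col` is applied first). -/
def colStack (col : ℕ) : ℕ → (ℕ → ℂ) → (ℕ → ℂ)
  | 0 => reflC col col
  | m + 1 => fun f => reflC (col - (m + 1)) col (colStack col m f)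

/-- The element of the Weyl group attached to an LS word with ones at positions
`I 1 < I 2 < ⋯ < I k`: the composition `C_k ∘ ⋯ ∘ C_1` of the columns
`C_j = σ_{ε_{I j - j + 1} + ε_{n+1-j}} ∘ ⋯ ∘ σ_{ε_{n-j} + ε_{n+1-j}} ∘ σ_{2ε_{n+1-j}}`. -/
def wordProd (I : ℕ → ℕ) (n : ℕ) : ℕ → (ℕ → ℂ) → (ℕ → ℂ)
  | 0 => id
  | j + 1 => fun f => colStack (n - j) ((n - j) - (I (j + 1) - j)) (wordProd I n j f)

end Stmt4

namespace Finset

variable {α : Type*} [LinearOrder α]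

theorem card_filter_lt_orderEmbOfFin (s : Finset α) {N : ℕ} (h : s.card = N) (i : Fin N) :
    #{y ∈ s | y < s.orderEmbOfFin h i} = i := by
  have : {y ∈ s | y < s.orderEmbOfFin h i} = (Iio i).map (s.orderEmbOfFin h).toEmbedding := by
    ext y
    simp only [mem_filter, mem_map, mem_Iio, RelEmbedding.coe_toEmbedding]
    constructor
    · rintro ⟨hy, hlt⟩
      obtain ⟨i', rfl⟩ : y ∈ Set.range (s.orderEmbOfFin h) := by simpa using hy
      exact ⟨i', (s.orderEmbOfFin h).lt_iff_lt.mp hlt, rfl⟩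
    · rintro ⟨i', hi', rfl⟩
      exact ⟨orderEmbOfFin_mem s h i', (s.orderEmbOfFin h).lt_iff_lt.mpr hi'⟩
  rw [this, card_map, Fin.card_Iio]

theorem orderEmbOfFin_of_eq_erase {s s' : Finset α} {N : ℕ} (h : s.card = N + 1)
    (h' : s'.card = N) {i : Fin (N + 1)} (hs' : s' = s.erase (s.orderEmbOfFin h i)) (t : Fin N) :
    s'.orderEmbOfFin h' t = s.orderEmbOfFin h (i.succAbove t) := by
  refine (congrFun (orderEmbOfFin_unique h' (fun t => ?_)
    ((s.orderEmbOfFin h).strictMono.comp (Fin.strictMono_succAbove i))) t).symm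
  simp [hs', Fin.succAbove_ne]

end Finset

namespace Stmt4

open Finset

theorem colStack_apply {col m : ℕ} (hm : m < col) (f : ℕ → ℂ) (t : ℕ) :
    colStack col m f t =
      if t < col - m then f t
      else if t < col then f (t + 1)
      else if t = col then -f (col - m) else f t := by
  induction m generalizing t with
  | zero =>
    simp only [colStack, reflC]
    split_ifs <;> first | rfl | omega
  | succ m ih =>
    simp only [colStack, reflC, ih (by omega)]
    split_ifs <;> first | rfl | omega | (rw [neg_neg]; congr 1; omega)

def unmoved (I : ℕ → ℕ) (n j : ℕ) : Finset ℕ :=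
  Icc 1 n \ (Icc 1 j).image I

theorem unmoved_succ (I : ℕ → ℕ) (n j : ℕ) :
    unmoved I n (j + 1) = (unmoved I n j).erase (I (j + 1)) := by
  rw [unmoved, unmoved, ← insert_Icc_right_eq_Icc_add_one (by omega : 1 ≤ j + 1), image_insert,
    sdiff_insert]

section

variable {I : ℕ → ℕ} {n k : ℕ}

theorem card_image_Icc_of_strictMonoOn (hI : StrictMonoOn I (Set.Icc 1 k)) {j : ℕ} (hj : j ≤ k) :
    #((Icc 1 j).image I) = j := by
  rw [card_image_of_injOn, Nat.card_Icc, Nat.add_sub_cancel]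
  exact (hI.mono (by simpa using Set.Icc_subset_Icc_right hj)).injOn

theorem card_unmoved (hI : StrictMonoOn I (Set.Icc 1 k))
    (hIn : Set.MapsTo I (Set.Icc 1 k) (Set.Icc 1 n)) {j : ℕ} (hj : j ≤ k) :
    #(unmoved I n j) = n - j := by
  rw [unmoved, card_sdiff_of_subset, Nat.card_Icc, Nat.add_sub_cancel,
    card_image_Icc_of_strictMonoOn hI hj]
  intro x hx
  obtain ⟨a, ha, rfl⟩ := mem_image.mp hx
  simpa using hIn (by simp at ha ⊢; omega : a ∈ Set.Icc 1 k)

theorem image_Icc_subset_Ico (hI : StrictMonoOn I (Set.Icc 1 k))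
    (hIn : Set.MapsTo I (Set.Icc 1 k) (Set.Icc 1 n)) {j : ℕ} (hj : j < k) :
    (Icc 1 j).image I ⊆ Ico 1 (I (j + 1)) := by
  intro x hx
  obtain ⟨a, ha, rfl⟩ := mem_image.mp hx
  rw [mem_Icc] at ha
  rw [mem_Ico]
  exact ⟨(hIn (by simp; omega : a ∈ Set.Icc 1 k)).1,
    hI (by simp; omega) (by simp; omega) (by omega)⟩

theorem mem_unmoved (hI : StrictMonoOn I (Set.Icc 1 k))
    (hIn : Set.MapsTo I (Set.Icc 1 k) (Set.Icc 1 n)) {j : ℕ} (hj : j < k) :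
    I (j + 1) ∈ unmoved I n j := by
  refine mem_sdiff.mpr ⟨by simpa using hIn (by simp; omega : j + 1 ∈ Set.Icc 1 k), fun h => ?_⟩
  simpa using image_Icc_subset_Ico hI hIn hj h

theorem card_filter_unmoved_lt (hI : StrictMonoOn I (Set.Icc 1 k))
    (hIn : Set.MapsTo I (Set.Icc 1 k) (Set.Icc 1 n)) {j : ℕ} (hj : j < k) :
    #{y ∈ unmoved I n j | y < I (j + 1)} + j + 1 = I (j + 1) := by
  have hmem : I (j + 1) ∈ Set.Icc 1 n := hIn (by simp; omega)
  have : {y ∈ unmoved I n j | y < I (j + 1)} = Ico 1 (I (j + 1)) \ (Icc 1 j).image I := by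
    ext y
    simp only [unmoved, mem_filter, mem_sdiff, mem_Icc, mem_Ico]
    grind
  have hcard := card_sdiff_add_card_eq_card (image_Icc_subset_Ico hI hIn hj)
  rw [card_image_Icc_of_strictMonoOn hI hj.le, Nat.card_Ico] at hcard
  grind

theorem exists_orderEmbOfFin_unmoved_eq (hI : StrictMonoOn I (Set.Icc 1 k))
    (hIn : Set.MapsTo I (Set.Icc 1 k) (Set.Icc 1 n)) {j : ℕ} (hj : j < k) {N : ℕ}
    (hc : #(unmoved I n j) = N) :
    ∃ i : Fin N, (unmoved I n j).orderEmbOfFin hc i = I (j + 1) ∧ (i : ℕ) + j + 1 = I (j + 1) := by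
  obtain ⟨i, hi⟩ : I (j + 1) ∈ Set.range ((unmoved I n j).orderEmbOfFin hc) := by
    simpa using mem_unmoved hI hIn hj
  refine ⟨i, hi, ?_⟩
  rw [← card_filter_lt_orderEmbOfFin _ hc i, hi, card_filter_unmoved_lt hI hIn hj]

theorem wordProd_apply_unmoved (hI : StrictMonoOn I (Set.Icc 1 k))
    (hIn : Set.MapsTo I (Set.Icc 1 k) (Set.Icc 1 n)) (lam : ℕ → ℂ) {j : ℕ} (hj : j ≤ k) {N : ℕ}
    (hc : #(unmoved I n j) = N) (t : Fin N) :
    wordProd I n j lam (t + 1) = lam ((unmoved I n j).orderEmbOfFin hc t) := by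
  induction j generalizing N with
  | zero =>
    have hS : unmoved I n 0 = Icc 1 n := by simp [unmoved]
    have hN : N = n := by simpa [hS] using hc.symm
    have hsucc : (fun t : Fin N => (t : ℕ) + 1) = (unmoved I n 0).orderEmbOfFin hc :=
      orderEmbOfFin_unique hc (fun t => by simp [hS]; omega) (fun a b hab => by simpa using hab)
    simp only [wordProd, id_eq, ← hsucc]
  | succ j ih =>
    replace hj : j < k := hj
    have hmem := mem_unmoved hI hIn hj
    have hc' : #(unmoved I n j) = N + 1 := by rw [← hc, unmoved_succ, card_erase_add_one hmem]
    have hN : N + 1 = n - j := hc'.symm.trans (card_unmoved hI hIn hj.le)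
    obtain ⟨i, hi, hival⟩ := exists_orderEmbOfFin_unmoved_eq hI hIn hj hc'
    rw [orderEmbOfFin_of_eq_erase hc' hc (by rw [unmoved_succ, hi]), ← ih hj.le hc']
    simp only [wordProd]
    have ht := t.isLt
    rw [colStack_apply (by omega), show n - j - (n - j - (I (j + 1) - j)) = i + 1 by omega]
    rcases lt_or_ge (t : ℕ) i with hti | hti
    · rw [if_pos (by omega), Fin.succAbove_of_castSucc_lt _ _ hti, Fin.val_castSucc]
    · rw [if_neg (by omega), if_pos (by omega), Fin.succAbove_of_le_castSucc _ _ hti, Fin.val_succ]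

theorem wordProd_apply_moved (hI : StrictMonoOn I (Set.Icc 1 k))
    (hIn : Set.MapsTo I (Set.Icc 1 k) (Set.Icc 1 n)) (lam : ℕ → ℂ) {j : ℕ} (hj : j ≤ k) {t : ℕ}
    (hjt : n - j < t) (htn : t ≤ n) :
    wordProd I n j lam t = -lam (I (n + 1 - t)) := by
  induction j with
  | zero => omega
  | succ j ih =>
    replace hj : j < k := hj
    have hc := card_unmoved hI hIn hj.le
    obtain ⟨i, hi, hival⟩ := exists_orderEmbOfFin_unmoved_eq hI hIn hj hc
    have hin := i.isLt
    simp only [wordProd]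
    rw [colStack_apply (by omega)]
    rcases (by omega : t = n - j ∨ n - j < t) with rfl | ht
    · rw [if_neg (by omega), if_neg (by omega), if_pos rfl,
        show n - j - (n - j - (I (j + 1) - j)) = i + 1 by omega,
        wordProd_apply_unmoved hI hIn lam hj.le hc i, hi, show n + 1 - (n - j) = j + 1 by omega]
    · rw [if_neg (by omega), if_neg (by omega), if_neg (by omega), ih hj.le ht]

end

section

variable {T : Finset ℕ} {k : ℕ} {I : ℕ → ℕ}

theorem apply_eq_orderEmbOfFin (hk : #T = k) (hI : ∀ j : Fin k, I (j + 1) = T.orderEmbOfFin hk j)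
    {a : ℕ} (ha : a ∈ Set.Icc 1 k) :
    I a = T.orderEmbOfFin hk ⟨a - 1, by grind⟩ :=
  (congrArg I (Nat.sub_add_cancel ha.1).symm).trans (hI ⟨a - 1, by grind⟩)

theorem strictMonoOn_Icc_of_eq_orderEmbOfFin (hk : #T = k)
    (hI : ∀ j : Fin k, I (j + 1) = T.orderEmbOfFin hk j) : StrictMonoOn I (Set.Icc 1 k) :=
  fun a ha b hb hab => by
    rw [apply_eq_orderEmbOfFin hk hI ha, apply_eq_orderEmbOfFin hk hI hb]
    exact (T.orderEmbOfFin hk).strictMono (Fin.mk_lt_mk.mpr (by grind))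

theorem image_Icc_eq_of_eq_orderEmbOfFin (hk : #T = k)
    (hI : ∀ j : Fin k, I (j + 1) = T.orderEmbOfFin hk j) : (Icc 1 k).image I = T := by
  refine eq_of_subset_of_card_le (fun x hx => ?_) ?_
  · obtain ⟨a, ha, rfl⟩ := mem_image.mp hx
    rw [apply_eq_orderEmbOfFin hk hI (by simpa using ha)]
    exact orderEmbOfFin_mem T hk _
  · rw [hk, card_image_Icc_of_strictMonoOn (strictMonoOn_Icc_of_eq_orderEmbOfFin hk hI) le_rfl]

end

/-- Let `w ∈ W^p` have LS word (digits at the 1-indexed positions `1, …, n`) with digit 1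
exactly at positions `i_1 < ⋯ < i_k`.  Then the standard (signed permutation) action of `w`
on `λ = [λ_1, …, λ_n]` yields the `n`-tuple obtained by deleting the coordinates
`λ_{i_1}, …, λ_{i_k}`, keeping the remaining coordinates in order, and appending
`-λ_{i_k}, -λ_{i_{k-1}}, …, -λ_{i_1}` at the end. -/
theorem ls_word_action (n k : ℕ) (hkn : k ≤ n) (d : ℕ → Bool) (lam : ℕ → ℂ)
    (hk : (((Finset.Icc 1 n).filter (fun p => d p = true)).card = k))
    (hz : (((Finset.Icc 1 n).filter (fun p => d p = false)).card = n - k))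
    (I : ℕ → ℕ)
    (hI : ∀ j : Fin k,
      I (j.val + 1) = ((Finset.Icc 1 n).filter (fun p => d p = true)).orderEmbOfFin hk j) :
    (∀ t : Fin (n - k),
        wordProd I n k lam (t.val + 1)
          = lam (((Finset.Icc 1 n).filter (fun p => d p = false)).orderEmbOfFin hz t)) ∧
    (∀ m : Fin k,
        wordProd I n k lam (n - k + m.val + 1)
          = -lam (((Finset.Icc 1 n).filter (fun p => d p = true)).orderEmbOfFin hk m.rev)) := by
  have hmono := strictMonoOn_Icc_of_eq_orderEmbOfFin hk hI
  have hmoved := image_Icc_eq_of_eq_orderEmbOfFin hk hI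
  have hmaps : Set.MapsTo I (Set.Icc 1 k) (Set.Icc 1 n) := fun a ha => by
    have := hmoved ▸ mem_image_of_mem I (by simpa using ha : a ∈ Icc 1 k)
    simpa using (mem_filter.mp this).1
  have hunmoved : unmoved I n k = (Icc 1 n).filter (fun p => d p = false) := by
    ext x
    simp only [unmoved, hmoved, mem_sdiff, mem_filter]
    cases d x <;> simp
  refine ⟨fun t => ?_, fun m => ?_⟩
  · rw [wordProd_apply_unmoved hmono hmaps lam le_rfl (hunmoved ▸ hz) t]
    simp only [hunmoved]
  · rw [wordProd_apply_moved hmono hmaps lam le_rfl (by omega) (by omega),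
      apply_eq_orderEmbOfFin hk hI (by simp; omega)]
    congr 3
    rw [Fin.ext_iff, Fin.val_rev, Fin.val_mk]
    omega

end Stmt4
end

section
/- Let λ + ρ be a dominant integral weight for sp(2n,ℂ) with singular set Σ = {α_k} for a short simple root α_k (k < n), i.e., the coordinates of λ+ρ are strictly decreasing and positive except that coordinates k and k+1 are equal. Then the singular Hasse diagram W^{p,Σ} (minimal length coset representatives of W_Σ-cosets contained in W^p) consists exactly of the LS words d_1⋯d_n of length n with d_k = 0 and d_{k+1} = 1. -/
namespace Stmt7

/-- The action of the element of `W^p` with LS word `w` (on `n` coordinates, `true` = digit 1)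
on a coordinate tuple `μ`: the coordinates at positions with digit 1 are deleted, the
remaining coordinates are kept in order, and the negatives of the deleted coordinates are
appended at the end in reverse order. -/
def actWord {n : ℕ} (w : Fin n → Bool) (μ : Fin n → ℤ) : Fin n → ℤ := fun t =>
  if h : t.val < (Finset.univ.filter (fun i => w i = false)).card then
    μ ((Finset.univ.filter (fun i => w i = false)).orderEmbOfFin rfl ⟨t.val, h⟩)
  else
    -μ ((Finset.univ.filter (fun i => w i = true)).orderEmbOfFin rfl
        (Fin.rev ⟨t.val - (Finset.univ.filter (fun i => w i = false)).card, by
          have h1 := Finset.card_filter_add_card_filter_not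
            (s := (Finset.univ : Finset (Fin n))) (p := fun i => w i = false)
          simp only [Bool.not_eq_false, Finset.card_univ, Fintype.card_fin] at h1
          have h2 := t.isLt
          omega⟩))

/-- The length of the element of `W^p` with LS word `w`: the word with ones at the
1-indexed positions `i_1 < ⋯ < i_k` has length `(n+1)k - ∑ i_j = ∑ (n - (i_j - 1))`. -/
def lsLength {n : ℕ} (w : Fin n → Bool) : ℕ :=
  ∑ i ∈ Finset.univ.filter (fun i => w i = true), (n - i.val)

/-!
The list of coordinates of `w(μ)` is `μ` along the 0-positions of `w` followed by `-μ` along the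
1-positions in reverse order. As `μ > 0`, the signs separate the two blocks, so `w(μ)` determines
the `μ`-values along the 1-positions, and `w(μ)` is strictly decreasing iff `μ` is injective on
each block, i.e. iff the tied positions `k, k+1` carry different digits. Swapping the digits at
`k, k+1` does not change `w(μ)` and turns `10` into `01` at lower length. Conversely, if `w` reads
`01` there, the 1-positions of any word with the same image lie pointwise weakly to the left of
those of `w` (only the tie can move a position, from `k+1` to `k`), so its length is not smaller.
-/

theorem List.append_inj_of_forall_of_forall_not {α : Type*} {p : α → Prop} [DecidablePred p]
    {a b c d : List α} (ha : ∀ x ∈ a, p x) (hb : ∀ x ∈ b, ¬ p x) (hc : ∀ x ∈ c, p x)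
    (hd : ∀ x ∈ d, ¬ p x) (h : a ++ b = c ++ d) : a = c ∧ b = d := by
  have hac : a = c := by
    have hfa : a.filter (p ·) = a := List.filter_eq_self.2 (by simpa using ha)
    have hfb : b.filter (p ·) = [] := List.filter_eq_nil_iff.2 (by simpa using hb)
    have hfc : c.filter (p ·) = c := List.filter_eq_self.2 (by simpa using hc)
    have hfd : d.filter (p ·) = [] := List.filter_eq_nil_iff.2 (by simpa using hd)
    simpa [hfa, hfb, hfc, hfd] using congrArg (List.filter (p ·)) h
  exact ⟨hac, List.append_cancel_left (hac ▸ h)⟩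

theorem Finset.pairwise_sort_iff {α : Type*} [LinearOrder α] {R : α → α → Prop} (s : Finset α) :
    s.sort.Pairwise R ↔ ∀ x ∈ s, ∀ y ∈ s, x < y → R x y := by
  have hlt : s.sort.Pairwise (· < ·) := List.sortedLT_iff_pairwise.1 s.sortedLT_sort
  constructor
  · intro hR x hx y hy
    exact List.Pairwise.forall_of_forall_of_flip (R := fun x y => x < y → R x y) (l := s.sort)
      (fun x _ h => absurd h (lt_irrefl x)) (hR.imp fun h => Function.const _ h)
      (hlt.imp fun h h' => absurd h (lt_asymm h')) ((s.mem_sort _).2 hx) ((s.mem_sort _).2 hy)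
  · intro hR
    exact hlt.imp_of_mem fun hx hy h => hR _ ((s.mem_sort _).1 hx) _ ((s.mem_sort _).1 hy) h

theorem Antitone.strictAntiOn_iff_not_mem_and_mem {α β : Type*} [LinearOrder α] [PartialOrder β]
    {f : α → β} {a b : α} (hf : Antitone f) (hab : a < b) (hfab : f a = f b)
    (htie : ∀ i j, i < j → f i = f j → i = a ∧ j = b) (s : Set α) :
    StrictAntiOn f s ↔ ¬ (a ∈ s ∧ b ∈ s) := by
  constructor
  · rintro hs ⟨ha, hb⟩
    exact (hs ha hb hab).ne hfab.symm
  · intro hs i hi j hj hij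
    refine (hf hij.le).lt_of_ne fun h => hs ?_
    obtain ⟨rfl, rfl⟩ := htie i j hij h.symm
    exact ⟨hi, hj⟩

theorem Function.comp_swap_of_eq {α β : Type*} [DecidableEq α] {f : α → β} {a b : α}
    (h : f a = f b) : f ∘ Equiv.swap a b = f := by
  simp [Equiv.comp_swap_eq_update, h]

theorem Fin.strictMonoOn_swap {n : ℕ} {a b : Fin n} (hab : b.val = a.val + 1) {s : Set (Fin n)}
    (hs : ¬ (a ∈ s ∧ b ∈ s)) : StrictMonoOn (Equiv.swap a b) s := by
  intro x hx y hy hxy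
  grind [Fin.lt_def, Fin.ext_iff]

section Words

variable {n : ℕ}

def zeros (w : Fin n → Bool) : Finset (Fin n) := Finset.univ.filter (fun i => w i = false)

def ones (w : Fin n → Bool) : Finset (Fin n) := Finset.univ.filter (fun i => w i = true)

theorem card_zeros_add_card_ones (w : Fin n → Bool) : (zeros w).card + (ones w).card = n := by
  simpa [zeros, ones] using Finset.card_filter_add_card_filter_not
    (s := (Finset.univ : Finset (Fin n))) (fun i => w i = false)

theorem ofFn_actWord (w : Fin n → Bool) (μ : Fin n → ℤ) :
    List.ofFn (actWord w μ) =
      (zeros w).sort.map μ ++ (((ones w).sort.map μ).map (- ·)).reverse := by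
  have hcard := card_zeros_add_card_ones w
  apply List.ext_getElem
  · simp [Finset.length_sort, hcard]
  · intro t h₁ h₂
    simp only [List.getElem_ofFn, actWord]
    split_ifs with h
    · rw [List.getElem_append_left (by simpa [zeros] using h)]
      simp [Finset.orderEmbOfFin_apply, zeros]
    · rw [List.getElem_append_right (by simpa [zeros] using h)]
      simp only [Fin.rev, Finset.orderEmbOfFin_apply, Fin.getElem_fin, ones, List.map_map, zeros,
        List.length_map, Finset.length_sort, List.getElem_reverse, List.getElem_map,
        Function.comp_apply, neg_inj]
      congr 2
      omega

theorem actWord_eq_of_map_sort_eq {v w : Fin n → Bool} {μ : Fin n → ℤ}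
    (h₀ : (zeros v).sort.map μ = (zeros w).sort.map μ)
    (h₁ : (ones v).sort.map μ = (ones w).sort.map μ) : actWord v μ = actWord w μ := by
  rw [← List.ofFn_inj, ofFn_actWord, ofFn_actWord, h₀, h₁]

theorem map_sort_ones_eq_of_actWord_eq {v w : Fin n → Bool} {μ : Fin n → ℤ}
    (hμ : ∀ i, 0 < μ i) (h : actWord v μ = actWord w μ) :
    (ones v).sort.map μ = (ones w).sort.map μ := by
  rw [← List.ofFn_inj, ofFn_actWord, ofFn_actWord] at h
  have hneg := (List.append_inj_of_forall_of_forall_not (p := (0 < ·))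
    (by simp [hμ]) (by simp [hμ, le_of_lt]) (by simp [hμ]) (by simp [hμ, le_of_lt]) h).2
  exact (List.map_injective_iff.2 neg_injective) (List.reverse_injective hneg)

theorem strictAnti_actWord_iff (w : Fin n → Bool) {μ : Fin n → ℤ} (hμ : ∀ i, 0 < μ i) :
    StrictAnti (actWord w μ) ↔ StrictAntiOn μ (zeros w) ∧ StrictAntiOn μ (ones w) := by
  rw [← List.sortedGT_ofFn_iff, List.sortedGT_iff_pairwise, ofFn_actWord, List.pairwise_append,
    List.pairwise_reverse, List.pairwise_map, List.pairwise_map, List.pairwise_map,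
    Finset.pairwise_sort_iff, Finset.pairwise_sort_iff]
  have hsep : ∀ a ∈ (zeros w).sort.map μ, ∀ b ∈ (((ones w).sort.map μ).map (- ·)).reverse,
      b < a := by
    simp only [List.mem_map, List.mem_reverse]
    rintro _ ⟨i, -, rfl⟩ _ ⟨_, ⟨j, -, rfl⟩, rfl⟩
    linarith [hμ i, hμ j]
  simp only [gt_iff_lt, neg_lt_neg_iff]
  rw [and_iff_left hsep]
  rfl

theorem lsLength_eq_sum_sort (w : Fin n → Bool) :
    lsLength w = ((ones w).sort.map (fun i => n - i.val)).sum := by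
  rw [← List.sum_toFinset _ (Finset.sort_nodup _ _), Finset.sort_toFinset]
  rfl

theorem zeros_comp_perm (w : Fin n → Bool) (σ : Equiv.Perm (Fin n)) :
    zeros (w ∘ σ) = (zeros w).map σ.symm.toEmbedding := by
  ext i
  simp [zeros, Finset.mem_map_equiv]

theorem ones_comp_perm (w : Fin n → Bool) (σ : Equiv.Perm (Fin n)) :
    ones (w ∘ σ) = (ones w).map σ.symm.toEmbedding := by
  ext i
  simp [ones, Finset.mem_map_equiv]

end Words

section Singular

variable {n : ℕ} {μ : Fin n → ℤ} {a b : Fin n}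

theorem strictAnti_actWord_iff_ne (w : Fin n → Bool) (hμ : ∀ i, 0 < μ i) (hanti : Antitone μ)
    (hab : a < b) (hμab : μ a = μ b) (htie : ∀ i j, i < j → μ i = μ j → i = a ∧ j = b) :
    StrictAnti (actWord w μ) ↔ w a ≠ w b := by
  rw [strictAnti_actWord_iff w hμ, Antitone.strictAntiOn_iff_not_mem_and_mem hanti hab hμab htie,
    Antitone.strictAntiOn_iff_not_mem_and_mem hanti hab hμab htie]
  simp only [zeros, ones, Finset.coe_filter, Finset.mem_univ, true_and, Set.mem_ofPred_eq]
  cases w a <;> cases w b <;> simp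

theorem map_sort_map_swap (hab : b.val = a.val + 1) (hμab : μ a = μ b) {s : Finset (Fin n)}
    (hs : ¬ (a ∈ s ∧ b ∈ s)) :
    (s.map (Equiv.swap a b).toEmbedding).sort.map μ = s.sort.map μ := by
  rw [← (Fin.strictMonoOn_swap hab (s := s) (by simpa using hs)).map_finsetSort, List.map_map,
    Equiv.coe_toEmbedding, Function.comp_swap_of_eq hμab]

theorem actWord_comp_swap {w : Fin n → Bool} (hab : b.val = a.val + 1) (hμab : μ a = μ b)
    (hw : w a ≠ w b) : actWord (w ∘ Equiv.swap a b) μ = actWord w μ := by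
  apply actWord_eq_of_map_sort_eq
  · rw [zeros_comp_perm, Equiv.symm_swap, map_sort_map_swap hab hμab]
    simp only [zeros, Finset.mem_filter, Finset.mem_univ, true_and]
    rintro ⟨ha, hb⟩
    exact hw (ha.trans hb.symm)
  · rw [ones_comp_perm, Equiv.symm_swap, map_sort_map_swap hab hμab]
    simp only [ones, Finset.mem_filter, Finset.mem_univ, true_and]
    rintro ⟨ha, hb⟩
    exact hw (ha.trans hb.symm)

theorem lsLength_comp_swap_lt {w : Fin n → Bool} (hab : a < b) (ha : w a = true)
    (hb : w b = false) : lsLength (w ∘ Equiv.swap a b) < lsLength w := by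
  change ∑ i ∈ ones (w ∘ _), (n - i.val) < ∑ i ∈ ones w, (n - i.val)
  rw [ones_comp_perm, Equiv.symm_swap, Finset.sum_map]
  apply Finset.sum_lt_sum
  · intro i hi
    simp only [ones, Finset.mem_filter, Finset.mem_univ, true_and] at hi
    simp only [Equiv.coe_toEmbedding]
    grind [Fin.lt_def, Fin.ext_iff]
  · refine ⟨a, by simp [ones, ha], ?_⟩
    simp only [Equiv.coe_toEmbedding, Equiv.swap_apply_left]
    have := b.isLt
    rw [Fin.lt_def] at hab
    omega

theorem lsLength_le_of_actWord_eq {v w : Fin n → Bool} (hμ : ∀ i, 0 < μ i)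
    (htie : ∀ i j, i < j → μ i = μ j → i = a) (ha : w a = false)
    (h : actWord v μ = actWord w μ) : lsLength w ≤ lsLength v := by
  have hμw : List.Forall₂ (fun x y => x ≠ a ∧ μ x = μ y) (ones w).sort (ones v).sort := by
    refine (List.forall₂_and_left _ _).2 ⟨?_, ?_⟩
    · rintro x hx rfl
      simp [ones, ha] at hx
    · have hones := (map_sort_ones_eq_of_actWord_eq hμ h).symm
      rwa [← List.forall₂_eq_eq_eq, List.forall₂_map_left_iff, List.forall₂_map_right_iff] at hones
  rw [lsLength_eq_sum_sort, lsLength_eq_sum_sort]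
  refine List.Forall₂.sum_le_sum (List.forall₂_map_left_iff.2 (List.forall₂_map_right_iff.2 ?_))
  refine hμw.imp fun {x y} ⟨hxa, hxy⟩ => ?_
  have hyx : y ≤ x := not_lt.1 fun hlt => hxa (htie x y hlt hxy)
  exact Nat.sub_le_sub_left hyx n

end Singular

/-- Positions are 0-indexed: the singular simple root is the short root `α_{k0+1}`. -/
theorem singular_hasse_first_kind (n k0 : ℕ) (hk : k0 + 2 ≤ n) (μ : Fin n → ℤ)
    (hpos : ∀ i, 0 < μ i)
    (hanti : ∀ i j : Fin n, i < j → μ j ≤ μ i)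
    (heq : μ ⟨k0, by omega⟩ = μ ⟨k0 + 1, by omega⟩)
    (hsing : ∀ i j : Fin n, i < j → μ i = μ j → (i.val = k0 ∧ j.val = k0 + 1))
    (w : Fin n → Bool) :
    (StrictAnti (actWord w μ) ∧
        ∀ w' : Fin n → Bool, actWord w' μ = actWord w μ → lsLength w ≤ lsLength w') ↔
      (w ⟨k0, by omega⟩ = false ∧ w ⟨k0 + 1, by omega⟩ = true) := by
  set a : Fin n := ⟨k0, by omega⟩
  set b : Fin n := ⟨k0 + 1, by omega⟩
  have hsucc : b.val = a.val + 1 := rfl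
  have hab : a < b := Fin.lt_def.2 (by omega)
  have htie : ∀ i j, i < j → μ i = μ j → i = a ∧ j = b := fun i j hij h => by
    simpa [Fin.ext_iff] using hsing i j hij h
  rw [strictAnti_actWord_iff_ne w hpos (antitone_iff_forall_lt.2 fun i j => hanti i j) hab heq
    htie]
  constructor
  · rintro ⟨hne, hmin⟩
    by_contra hdigits
    obtain ⟨ha, hb⟩ : w a = true ∧ w b = false := by
      revert hne hdigits
      cases w a <;> cases w b <;> simp
    exact (lsLength_comp_swap_lt hab ha hb).not_ge (hmin _ (actWord_comp_swap hsucc heq hne))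
  · rintro ⟨ha, hb⟩
    exact ⟨by simp [ha, hb],
      fun v hv => lsLength_le_of_actWord_eq hpos (fun i j hij h => (htie i j hij h).1) ha hv⟩

end Stmt7
end

section
/- In the second-kind singular BGG complex (Σ = {α_n}), after adding the non-standard arrows d_1⋯d_{n−3} 0 0 0 → d_1⋯d_{n−3} 1 1 0 to the standard arrows within each parity class, the deletion map d_1⋯d_{n−2}d_{n−1}0 ↦ d_1⋯d_{n−2} becomes a directed-graph isomorphism from each parity class of W^{p,Σ} (rank n) onto the regular Hasse diagram W^{n−2} of binary words of length n−2, with arrows 01→10 (consecutive swap) and final 0→1. -/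
namespace Stmt12

/-- The standard arrows of the Hasse diagram `W^p` in the LS encoding: swap a consecutive
pair `01` to `10`, or change the last digit from `0` to `1`. -/
def Arrow (n : ℕ) (w w' : Fin n → Bool) : Prop :=
  (∃ i j : Fin n, j.val = i.val + 1 ∧ w i = false ∧ w j = true ∧
      w' i = true ∧ w' j = false ∧ ∀ t : Fin n, t ≠ i → t ≠ j → w' t = w t) ∨
  (∃ i : Fin n, i.val = n - 1 ∧ w i = false ∧ w' i = true ∧
      ∀ t : Fin n, t ≠ i → w' t = w t)

/-- The non-standard arrows of the second-kind singular BGG complex: the digits at the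
(0-indexed) positions `n - 3` and `n - 2` change from `(0, 0)` to `(1, 1)` (the last digit
stays `0`); this preserves the parity of the number of ones. -/
def NonStdArrow (n : ℕ) (w w' : Fin n → Bool) : Prop :=
  ∃ i j : Fin n, i.val = n - 3 ∧ j.val = n - 2 ∧
    w i = false ∧ w j = false ∧ w' i = true ∧ w' j = true ∧
    ∀ t : Fin n, t ≠ i → t ≠ j → w' t = w t

/-! Within a parity class a word `w` ending in `0` is determined by its prefix of length `n - 2`:
the digit at `n - 2` is forced by the parity. A `01 → 10` swap inside the prefix keeps the parity
of the prefix, hence the forced digit. A final `0 → 1` of the prefix changes it, hence flips the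
forced digit: from `⋯0 1 0` this is the standard swap at positions `n - 3, n - 2`, from `⋯0 0 0`
it is the non-standard arrow. Conversely no standard arrow can touch the last digit. -/

open Finset

section Words

variable {k n : ℕ}

def ones (w : Fin k → Bool) : Finset (Fin k) := univ.filter (fun t => w t = true)

lemma card_ones_of_flip {w w' : Fin k → Bool} {i : Fin k} (hwi : w i = false)
    (hw'i : w' i = true) (hrest : ∀ t, t ≠ i → w' t = w t) :
    #(ones w') = #(ones w) + 1 := by
  have hones : ones w' = insert i (ones w) := by
    ext t
    by_cases ht : t = i
    · simp [ones, ht, hw'i]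
    · simp [ones, ht, hrest t ht]
  rw [hones, card_insert_of_notMem (by simp [ones, hwi])]

lemma card_ones_of_swap {w w' : Fin k → Bool} {i j : Fin k} (hwi : w i = false)
    (hwj : w j = true) (hw'i : w' i = true) (hw'j : w' j = false)
    (hrest : ∀ t, t ≠ i → t ≠ j → w' t = w t) :
    #(ones w') = #(ones w) := by
  have hones : insert j (ones w') = insert i (ones w) := by
    ext t
    by_cases hti : t = i
    · simp [ones, hti, hw'i]
    by_cases htj : t = j
    · simp [ones, htj, hwj]
    · simp [ones, hti, htj, hrest t hti htj]
  have hcard := congrArg card hones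
  rwa [card_insert_of_notMem (by simp [ones, hw'j]), card_insert_of_notMem (by simp [ones, hwi]),
    add_left_inj] at hcard

def dropLastTwo (w : Fin n → Bool) : Fin (n - 2) → Bool :=
  fun t => w (Fin.castLE (n.sub_le 2) t)

lemma forall_of_castLE_of_lastTwo (hn : 2 ≤ n) {P : Fin n → Prop}
    (hpre : ∀ t : Fin (n - 2), P (Fin.castLE (n.sub_le 2) t))
    (hmid : P ⟨n - 2, by omega⟩) (hlast : P ⟨n - 1, by omega⟩) (t : Fin n) : P t := by
  rcases lt_trichotomy t.val (n - 2) with ht | ht | ht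
  · exact hpre ⟨t, ht⟩
  · rwa [show t = ⟨n - 2, by omega⟩ from Fin.ext ht]
  · rwa [show t = ⟨n - 1, by omega⟩ from Fin.ext (show t.val = n - 1 by omega)]

lemma card_ones_eq_card_ones_dropLastTwo_add (hn : 2 ≤ n) {w : Fin n → Bool}
    (hlast : w ⟨n - 1, by omega⟩ = false) :
    #(ones w) = #(ones (dropLastTwo w)) + (w ⟨n - 2, by omega⟩).toNat := by
  let digit : ℕ → ℕ := fun m => if h : m < n then (w ⟨m, h⟩).toNat else 0
  have hsum : ∀ {l : ℕ} (hl : l ≤ n) (v : Fin l → Bool), (∀ t, v t = w (Fin.castLE hl t)) →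
      #(ones v) = ∑ m ∈ range l, digit m := by
    intro l hl v hv
    rw [ones, card_filter, sum_fin_eq_sum_range]
    refine sum_congr rfl fun m hm => ?_
    have hml : m < l := mem_range.1 hm
    simp [digit, hml, hml.trans_le hl, hv, Bool.toNat]
  rw [hsum le_rfl w (fun _ => rfl), hsum (n.sub_le 2) (dropLastTwo w) (fun _ => rfl)]
  conv_lhs => rw [show n = n - 2 + 1 + 1 by omega, sum_range_succ, sum_range_succ]
  have hmid : digit (n - 2) = (w ⟨n - 2, by omega⟩).toNat := dif_pos (by omega)
  have hzero : digit (n - 2 + 1) = 0 := by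
    rw [show n - 2 + 1 = n - 1 by omega]
    simp [digit, show n - 1 < n by omega, hlast]
  rw [hmid, hzero, add_zero]

lemma mid_eq_iff_even_iff (hn : 2 ≤ n) {u v : Fin n → Bool} (hu : u ⟨n - 1, by omega⟩ = false)
    (hv : v ⟨n - 1, by omega⟩ = false) (hpar : Even #(ones u) ↔ Even #(ones v)) :
    u ⟨n - 2, by omega⟩ = v ⟨n - 2, by omega⟩ ↔
      (Even #(ones (dropLastTwo u)) ↔ Even #(ones (dropLastTwo v))) := by
  rw [card_ones_eq_card_ones_dropLastTwo_add hn hu,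
    card_ones_eq_card_ones_dropLastTwo_add hn hv] at hpar
  revert hpar
  cases u ⟨n - 2, by omega⟩ <;> cases v ⟨n - 2, by omega⟩ <;>
    simp [Nat.even_add_one, -Nat.not_even_iff_odd] <;> tauto

lemma eq_of_dropLastTwo_eq (hn : 2 ≤ n) {u v : Fin n → Bool} (hu : u ⟨n - 1, by omega⟩ = false)
    (hv : v ⟨n - 1, by omega⟩ = false) (hpar : Even #(ones u) ↔ Even #(ones v))
    (h : dropLastTwo u = dropLastTwo v) : u = v := by
  have hmid := (mid_eq_iff_even_iff hn hu hv hpar).2 (by rw [h])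
  funext t
  exact forall_of_castLE_of_lastTwo hn (P := fun t => u t = v t) (fun t => congrFun h t) hmid
    (hu.trans hv.symm) t

lemma exists_dropLastTwo_eq (hn : 2 ≤ n) (r : Fin (n - 2) → Bool) (P : Prop) :
    ∃ w : Fin n → Bool,
      dropLastTwo w = r ∧ w ⟨n - 1, by omega⟩ = false ∧ (Even #(ones w) ↔ P) := by
  have hext : ∀ c : Bool, ∃ w : Fin n → Bool,
      dropLastTwo w = r ∧ w ⟨n - 2, by omega⟩ = c ∧ w ⟨n - 1, by omega⟩ = false := fun c =>
    ⟨fun i => if h : i.val < n - 2 then r ⟨i, h⟩ else if i.val = n - 2 then c else false,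
      by funext t; simp [dropLastTwo], by simp,
      by simp [show ¬n - 1 < n - 2 by omega, show n - 1 ≠ n - 2 by omega]⟩
  by_cases hr : Even #(ones r) ↔ P
  · obtain ⟨w, rfl, hmid, hlast⟩ := hext false
    refine ⟨w, rfl, hlast, ?_⟩
    rwa [card_ones_eq_card_ones_dropLastTwo_add hn hlast, hmid, Bool.toNat_false, add_zero]
  · obtain ⟨w, rfl, hmid, hlast⟩ := hext true
    refine ⟨w, rfl, hlast, ?_⟩
    rw [card_ones_eq_card_ones_dropLastTwo_add hn hlast, hmid, Bool.toNat_true, Nat.even_add_one]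
    tauto

end Words

section Arrows

variable {n : ℕ} {u v : Fin n → Bool}

lemma arrow_dropLastTwo_of_flip (hn : 2 < n) {i j : Fin n} (hi : i.val = n - 3)
    (hj : j.val = n - 2) (hui : u i = false) (hvi : v i = true)
    (hrest : ∀ t, t ≠ i → t ≠ j → v t = u t) :
    Arrow (n - 2) (dropLastTwo u) (dropLastTwo v) := by
  obtain ⟨i, rfl⟩ : ∃ i', Fin.castLE (n.sub_le 2) i' = i := ⟨⟨i, by omega⟩, rfl⟩
  refine Or.inr ⟨i, by simp at hi; omega, hui, hvi, fun t ht => hrest _ ?_ ?_⟩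
  · exact (Fin.castLE_injective _).ne ht
  · exact Fin.ne_of_val_ne (by simp; omega)

lemma arrow_dropLastTwo_of_nonStdArrow (hn : 2 < n) (h : NonStdArrow n u v) :
    Arrow (n - 2) (dropLastTwo u) (dropLastTwo v) :=
  let ⟨_, _, hi, hj, hui, _, hvi, _, hrest⟩ := h
  arrow_dropLastTwo_of_flip hn hi hj hui hvi hrest

lemma arrow_dropLastTwo_of_arrow (hn : 2 < n) (hu : u ⟨n - 1, by omega⟩ = false)
    (hv : v ⟨n - 1, by omega⟩ = false) (h : Arrow n u v) :
    Arrow (n - 2) (dropLastTwo u) (dropLastTwo v) := by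
  rcases h with ⟨i, j, hji, hui, huj, hvi, hvj, hrest⟩ | ⟨i, hi, -, hvi, -⟩
  · have hj : j.val ≠ n - 1 := fun h => by
      rw [show j = ⟨n - 1, by omega⟩ from Fin.ext h, hu] at huj
      exact Bool.false_ne_true huj
    rcases (show j.val < n - 2 ∨ j.val = n - 2 by omega) with hj' | hj'
    · obtain ⟨i, rfl⟩ : ∃ i', Fin.castLE (n.sub_le 2) i' = i := ⟨⟨i, by omega⟩, rfl⟩
      obtain ⟨j, rfl⟩ : ∃ j', Fin.castLE (n.sub_le 2) j' = j := ⟨⟨j, hj'⟩, rfl⟩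
      exact Or.inl ⟨i, j, hji, hui, huj, hvi, hvj, fun t hti htj =>
        hrest _ ((Fin.castLE_injective _).ne hti) ((Fin.castLE_injective _).ne htj)⟩
    · exact arrow_dropLastTwo_of_flip hn (by omega) hj' hui hvi hrest
  · rw [show i = ⟨n - 1, by omega⟩ from Fin.ext hi, hv] at hvi
    exact absurd hvi Bool.false_ne_true

lemma arrow_or_nonStdArrow_of_arrow_dropLastTwo (hn : 2 < n) (hu : u ⟨n - 1, by omega⟩ = false)
    (hv : v ⟨n - 1, by omega⟩ = false) (hpar : Even #(ones u) ↔ Even #(ones v))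
    (h : Arrow (n - 2) (dropLastTwo u) (dropLastTwo v)) : Arrow n u v ∨ NonStdArrow n u v := by
  have hlast : v ⟨n - 1, by omega⟩ = u ⟨n - 1, by omega⟩ := hv.trans hu.symm
  have hmid := mid_eq_iff_even_iff (by omega) hu hv hpar
  rcases h with ⟨i, j, hji, hui, huj, hvi, hvj, hrest⟩ | ⟨i, hi, hui, hvi, hrest⟩
  · have hmid' := (hmid.2 (by rw [card_ones_of_swap hui huj hvi hvj hrest])).symm
    refine Or.inl (Or.inl ⟨_, _, hji, hui, huj, hvi, hvj, ?_⟩)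
    exact forall_of_castLE_of_lastTwo (by omega)
      (fun t hti htj => hrest t (mt (congrArg _) hti) (mt (congrArg _) htj))
      (fun _ _ => hmid') (fun _ _ => hlast)
  · have hflip : u ⟨n - 2, by omega⟩ ≠ v ⟨n - 2, by omega⟩ := by
      rw [Ne, hmid, card_ones_of_flip hui hvi hrest, Nat.even_add_one]
      tauto
    have hrest' : ∀ t, t ≠ Fin.castLE (n.sub_le 2) i → t ≠ ⟨n - 2, by omega⟩ → v t = u t :=
      forall_of_castLE_of_lastTwo (by omega) (fun t hti _ => hrest t (mt (congrArg _) hti))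
        (fun _ h => absurd rfl h) (fun _ _ => hlast)
    revert hflip
    cases hum : u ⟨n - 2, by omega⟩ <;> cases hvm : v ⟨n - 2, by omega⟩ <;> intro hflip
    · exact absurd rfl hflip
    · exact Or.inr ⟨_, _, by simp; omega, rfl, hui, hum, hvi, hvm, hrest'⟩
    · exact Or.inl (Or.inl ⟨_, _, by simp; omega, hui, hum, hvi, hvm, hrest'⟩)
    · exact absurd rfl hflip

end Arrows

/-- Second-kind singular BGG complex (`Σ = {α_n}`): on each parity class of the singular
Hasse diagram `W^{p,Σ}` (binary words of length `n` ending in `0`, with the parity of the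
number of ones given by `b`), after adding the non-standard arrows `⋯000 → ⋯110` to the
standard arrows within the class, the map deleting the last two digits is an isomorphism of
directed graphs onto the regular Hasse diagram `W^{n-2}` of binary words of length `n - 2`
(arrows: swap consecutive `01` to `10`, or change final `0` to `1`). -/
theorem singular_bgg_graph_iso_second_kind (n : ℕ) (hn : 3 ≤ n) (b : Bool) :
    Function.Bijective
      (fun (w : {w : Fin n → Bool // w ⟨n - 1, by omega⟩ = false ∧
          (Even (Finset.univ.filter (fun i => w i = true)).card ↔ b = true)}) =>
        fun t : Fin (n - 2) => w.val ⟨t.val, by omega⟩) ∧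
    ∀ (u v : {w : Fin n → Bool // w ⟨n - 1, by omega⟩ = false ∧
        (Even (Finset.univ.filter (fun i => w i = true)).card ↔ b = true)}),
      (Arrow n u.val v.val ∨ NonStdArrow n u.val v.val) ↔
        Arrow (n - 2) (fun t : Fin (n - 2) => u.val ⟨t.val, by omega⟩)
          (fun t : Fin (n - 2) => v.val ⟨t.val, by omega⟩) := by
  refine ⟨⟨fun u v huv => Subtype.ext ?_, fun r => ?_⟩, fun u v => ⟨?_, ?_⟩⟩
  · exact eq_of_dropLastTwo_eq (by omega) u.2.1 v.2.1 (u.2.2.trans v.2.2.symm) huv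
  · obtain ⟨w, hw, hlast, hpar⟩ := exists_dropLastTwo_eq (by omega) r (b = true)
    exact ⟨⟨w, hlast, hpar⟩, hw⟩
  · rintro (h | h)
    · exact arrow_dropLastTwo_of_arrow hn u.2.1 v.2.1 h
    · exact arrow_dropLastTwo_of_nonStdArrow hn h
  · exact arrow_or_nonStdArrow_of_arrow_dropLastTwo hn u.2.1 v.2.1 (u.2.2.trans v.2.2.symm)

end Stmt12
end
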